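/- arXiv:math/9412225 — 2 statements merged into one kernel-verified Lean document; each statement's English description precedes it below -/
import Mathlib

section
/- For 0<q<1 and any complex z, the basic hypergeometric series ${}_0\varphi_0(-;-;q,z) = \sum_{k=0}^\infty \frac{(-1)^k q^{k(k-1)/2}}{(q;q)_k} z^k$ equals the infinite product $(z;q)_\infty = \prod_{i=0}^\infty (1 - z q^i)$. -/
/-!
Write `φ(z) = ∑ cₖ zᵏ` for the series. The coefficients satisfy
`(1 - q^(k+1)) c_(k+1) = -qᵏ cₖ`, which is the functional equation `φ(z) = (1 - z) φ(qz)`;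
hence `φ(z) = (z;q)ₙ φ(qⁿz)` for every `n`. As `n → ∞`, `qⁿz → 0`, `φ` is continuous at `0`
with `φ(0) = 1`, and `(z;q)ₙ → (z;q)_∞`.
-/

open Complex

/-- The finite q-shifted factorial `(a;q)_k`. -/
noncomputable def qp (a q : ℂ) (k : ℕ) : ℂ := ∏ i ∈ Finset.range k, (1 - a * q ^ i)

/-- The infinite q-shifted factorial `(a;q)_∞`. -/
noncomputable def qpi (a q : ℂ) : ℂ := ∏' i : ℕ, (1 - a * q ^ i)

open Filter Topology

noncomputable def phi00Term (q z : ℂ) (k : ℕ) : ℂ :=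
  ((-1) ^ k * q ^ (k * (k - 1) / 2) / qp q q k) * z ^ k

noncomputable def phi00 (q z : ℂ) : ℂ := ∑' k, phi00Term q z k

lemma qp_succ (a q : ℂ) (k : ℕ) : qp a q (k + 1) = qp a q k * (1 - a * q ^ k) :=
  Finset.prod_range_succ _ _

lemma phi00Term_zero (q z : ℂ) : phi00Term q z 0 = 1 := by
  simp [phi00Term, qp]

lemma phi00Term_mul_left (q w z : ℂ) (k : ℕ) :
    phi00Term q (w * z) k = w ^ k * phi00Term q z k := by
  simp only [phi00Term, mul_pow]
  ring

section

variable {q : ℂ}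

lemma one_sub_pow_ne_zero (hq : ‖q‖ < 1) {n : ℕ} (hn : n ≠ 0) : 1 - q ^ n ≠ 0 := by
  refine sub_ne_zero.mpr fun h => ?_
  have : ‖q ^ n‖ < 1 := by rw [norm_pow]; exact pow_lt_one₀ (norm_nonneg q) hq hn
  rw [← h, norm_one] at this
  exact lt_irrefl 1 this

lemma qp_self_ne_zero (hq : ‖q‖ < 1) (k : ℕ) : qp q q k ≠ 0 :=
  Finset.prod_ne_zero_iff.mpr fun i _ => by
    rw [← pow_succ']
    exact one_sub_pow_ne_zero hq i.succ_ne_zero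

lemma phi00Term_succ (hq : ‖q‖ < 1) (z : ℂ) (k : ℕ) :
    phi00Term q z (k + 1) = -(q ^ k * z) / (1 - q ^ (k + 1)) * phi00Term q z k := by
  have := qp_self_ne_zero hq k
  have := one_sub_pow_ne_zero hq k.succ_ne_zero
  rw [phi00Term, phi00Term, qp_succ, Nat.triangle_succ, ← pow_succ']
  field_simp
  ring

lemma phi00Term_succ_sub (hq : ‖q‖ < 1) (z : ℂ) (k : ℕ) :
    phi00Term q z (k + 1) - phi00Term q (q * z) (k + 1) = -(z * phi00Term q (q * z) k) := by
  have := one_sub_pow_ne_zero hq k.succ_ne_zero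
  rw [phi00Term_mul_left, phi00Term_mul_left, phi00Term_succ hq]
  field_simp
  ring

lemma norm_phi00Term_succ_le (hq : ‖q‖ < 1) (z : ℂ) (k : ℕ) :
    ‖phi00Term q z (k + 1)‖ ≤ ‖q‖ ^ k * ‖z‖ / (1 - ‖q‖) * ‖phi00Term q z k‖ := by
  have hpow : ‖q‖ ^ (k + 1) ≤ ‖q‖ := pow_le_of_le_one (norm_nonneg q) hq.le k.succ_ne_zero
  have hden : 1 - ‖q‖ ≤ ‖1 - q ^ (k + 1)‖ := by
    calc 1 - ‖q‖ ≤ ‖(1 : ℂ)‖ - ‖q ^ (k + 1)‖ := by rw [norm_one, norm_pow]; linarith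
      _ ≤ ‖1 - q ^ (k + 1)‖ := norm_sub_norm_le _ _
  rw [phi00Term_succ hq, norm_mul, norm_div, norm_neg, norm_mul, norm_pow]
  gcongr

lemma summable_phi00Term (hq : ‖q‖ < 1) (z : ℂ) : Summable (phi00Term q z) := by
  refine summable_of_ratio_norm_eventually_le (r := 1 / 2) (by norm_num) ?_
  have hratio : Tendsto (fun k : ℕ => ‖q‖ ^ k * ‖z‖ / (1 - ‖q‖)) atTop (𝓝 0) := by
    simpa using ((tendsto_pow_atTop_nhds_zero_of_lt_one (norm_nonneg q) hq).mul_const ‖z‖).div_const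
      (1 - ‖q‖)
  filter_upwards [hratio.eventually_le_const (by norm_num : (0 : ℝ) < 1 / 2)] with k hk
  exact (norm_phi00Term_succ_le hq z k).trans (by gcongr)

lemma phi00_eq_one_sub_mul (hq : ‖q‖ < 1) (z : ℂ) : phi00 q z = (1 - z) * phi00 q (q * z) := by
  have hz := summable_phi00Term hq z
  have hqz := summable_phi00Term hq (q * z)
  have hdiff : phi00 q z - phi00 q (q * z) = -(z * phi00 q (q * z)) := by
    rw [phi00, phi00, ← hz.tsum_sub hqz, (hz.sub hqz).tsum_eq_zero_add]
    simp only [phi00Term_zero, sub_self, zero_add, phi00Term_succ_sub hq]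
    rw [tsum_neg, tsum_mul_left]
  linear_combination hdiff

lemma phi00_eq_qp_mul (hq : ‖q‖ < 1) (z : ℂ) (n : ℕ) :
    phi00 q z = qp z q n * phi00 q (q ^ n * z) := by
  induction n with
  | zero => simp [qp]
  | succ n ih =>
    rw [ih, phi00_eq_one_sub_mul hq (q ^ n * z), qp_succ, ← mul_assoc q, ← pow_succ']
    ring

lemma norm_phi00_sub_one_le (hq : ‖q‖ < 1) {w : ℂ} (hw : ‖w‖ ≤ 1) :
    ‖phi00 q w - 1‖ ≤ (∑' k, ‖phi00Term q 1 (k + 1)‖) * ‖w‖ := by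
  have hterm (k : ℕ) : ‖phi00Term q w k‖ = ‖w‖ ^ k * ‖phi00Term q 1 k‖ := by
    simpa [norm_pow] using congrArg norm (phi00Term_mul_left q w 1 k)
  have hw_norm : Summable fun k => ‖phi00Term q w (k + 1)‖ :=
    (summable_nat_add_iff (f := fun k => ‖phi00Term q w k‖) 1).mpr (summable_phi00Term hq w).norm
  have hone_norm : Summable fun k => ‖phi00Term q 1 (k + 1)‖ :=
    (summable_nat_add_iff (f := fun k => ‖phi00Term q 1 k‖) 1).mpr (summable_phi00Term hq 1).norm
  rw [phi00, (summable_phi00Term hq w).tsum_eq_zero_add, phi00Term_zero, add_sub_cancel_left,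
    ← tsum_mul_right]
  refine (norm_tsum_le_tsum_norm hw_norm).trans
    (hw_norm.tsum_le_tsum (fun k => ?_) (hone_norm.mul_right _))
  rw [hterm, mul_comm]
  gcongr
  exact pow_le_of_le_one (norm_nonneg w) hw k.succ_ne_zero

lemma tendsto_phi00_nhds_zero (hq : ‖q‖ < 1) : Tendsto (phi00 q) (𝓝 0) (𝓝 1) := by
  rw [tendsto_iff_norm_sub_tendsto_zero]
  have hbound : Tendsto (fun w : ℂ => (∑' k, ‖phi00Term q 1 (k + 1)‖) * ‖w‖) (𝓝 0) (𝓝 0) := by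
    simpa using (continuous_norm.tendsto (0 : ℂ)).const_mul (∑' k, ‖phi00Term q 1 (k + 1)‖)
  refine squeeze_zero' (Eventually.of_forall fun _ => norm_nonneg _) ?_ hbound
  filter_upwards [Metric.closedBall_mem_nhds (0 : ℂ) one_pos] with w hw
  exact norm_phi00_sub_one_le hq (mem_closedBall_zero_iff.mp hw)

lemma tendsto_qp_qpi (hq : ‖q‖ < 1) (z : ℂ) : Tendsto (qp z q) atTop (𝓝 (qpi z q)) := by
  have hsum : Summable fun i : ℕ => ‖-(z * q ^ i)‖ := by
    simpa [norm_pow, mul_comm] using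
      (summable_geometric_of_lt_one (norm_nonneg q) hq).mul_right ‖z‖
  have hmul : Multipliable fun i : ℕ => 1 - z * q ^ i := by
    simpa only [← sub_eq_add_neg] using multipliable_one_add_of_summable hsum
  exact hmul.tendsto_prod_tprod_nat

end

/-- For `0 < q < 1` and any complex `z`, the series `₀φ₀(-;-;q,z)` equals `(z;q)_∞`. -/
theorem stmt0 (q : ℝ) (hq : 0 < q) (hq1 : q < 1) (z : ℂ) :
    ∑' k : ℕ, ((-1) ^ k * (q : ℂ) ^ (k * (k - 1) / 2) / qp q q k) * z ^ k
      = qpi z q := by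
  change phi00 q z = qpi z q
  have hq' : ‖(q : ℂ)‖ < 1 := by rwa [norm_real, Real.norm_of_nonneg hq.le]
  have hpow : Tendsto (fun n : ℕ => (q : ℂ) ^ n * z) atTop (𝓝 0) := by
    simpa using (tendsto_pow_atTop_nhds_zero_of_norm_lt_one hq').mul_const z
  have hlim : Tendsto (fun n => qp z q n * phi00 q ((q : ℂ) ^ n * z)) atTop (𝓝 (qpi z q * 1)) :=
    (tendsto_qp_qpi hq' z).mul ((tendsto_phi00_nhds_zero hq').comp hpow)
  simp only [← phi00_eq_qp_mul hq', mul_one] at hlim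
  exact tendsto_nhds_unique tendsto_const_nhds hlim
end

section
/- Let $0<q<1$ and $a,b$ with $ab<1$, $|a|>1$, and suppose $x_k = (a q^k + a^{-1} q^{-k})/2$ with $|aq^k|>1$. For the Al-Salam–Chihara polynomials $p_n(x;a,b|q)$, the diagonal Poisson kernel $P_t(x_k,x_k;a,b|q) = \sum_{n=0}^\infty t^n \frac{p_n(x_k;a,b|q)^2}{(q,ab;q)_n}$ has radius of convergence in $t$ equal to $a^2 q^{2k}$ (which is greater than 1). -/
/-!
Writing `p_n(x_k) = a⁻ⁿ (ab;q)_n S_n` with the terminating sum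
`S_n = ∑_{j ≤ k} (q⁻ⁿ;q)_j c_j`, the factor `q^{nk} (q⁻ⁿ;q)_j = (qⁿ)^{k-j} ∏_{i<j} (qⁿ - qⁱ)`
tends to `0` for `j < k` and to `∏_{i<k} (-qⁱ)` for `j = k`. Hence `q^{nk} S_n` converges to
a nonzero limit, and so does `p_n(x_k)² / ((q,ab;q)_n) · (a²q^{2k})ⁿ`, because `(c;q)_n`
converges to the nonzero infinite product `(c;q)_∞`. A power series whose coefficients
times `rⁿ` have a nonzero limit has radius of convergence exactly `r`.
-/

/-- The finite q-shifted factorial `(a;q)_k` (real version). -/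
noncomputable def qpR (a q : ℝ) (k : ℕ) : ℝ := ∏ i ∈ Finset.range k, (1 - a * q ^ i)

/-- The Al-Salam–Chihara polynomial evaluated at the discrete mass point
`x_k = (aq^k + a⁻¹q^{-k})/2`, i.e. with `e^{iθ} = aq^k`, so that
`ae^{iθ} = a²q^k` and `ae^{-iθ} = q^{-k}`. -/
noncomputable def ascMass (q a b : ℝ) (k n : ℕ) : ℝ :=
  a⁻¹ ^ n * qpR (a * b) q n *
    ∑ j ∈ Finset.range (n + 1),
      qpR (q⁻¹ ^ n) q j * qpR (a ^ 2 * q ^ k) q j * qpR (q⁻¹ ^ k) q j /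
        (qpR q q j * qpR (a * b) q j) * q ^ j

open Filter Topology Finset

section RadiusOfConvergence

variable {u : ℕ → ℝ} {r L t : ℝ}

lemma summable_mul_pow_of_tendsto (hu : Tendsto (fun n => u n * r ^ n) atTop (𝓝 L))
    (ht : |t| < r) : Summable fun n => u n * t ^ n := by
  have hr : 0 < r := (abs_nonneg t).trans_lt ht
  obtain ⟨B, hB⟩ := hu.abs.bddAbove_range
  have hρ : |(|t| / r)| < 1 := by
    rwa [abs_of_nonneg (by positivity), div_lt_one hr]
  refine Summable.of_norm_bounded ((summable_geometric_of_abs_lt_one hρ).mul_left B) fun n => ?_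
  calc ‖u n * t ^ n‖ = |u n * r ^ n| * (|t| / r) ^ n := by
        rw [Real.norm_eq_abs, abs_mul, abs_mul, abs_pow, abs_pow, abs_of_pos hr, div_pow]
        field_simp
    _ ≤ B * (|t| / r) ^ n := by gcongr; exact hB ⟨n, rfl⟩

lemma not_summable_mul_pow_of_tendsto (hu : Tendsto (fun n => u n * r ^ n) atTop (𝓝 L))
    (hL : L ≠ 0) (ht : |r| < |t|) : ¬ Summable fun n => u n * t ^ n := by
  intro hs
  have ht0 : t ≠ 0 := abs_pos.1 ((abs_nonneg r).trans_lt ht)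
  have hρ : Tendsto (fun n => (r / t) ^ n) atTop (𝓝 0) :=
    tendsto_pow_atTop_nhds_zero_of_abs_lt_one (by rwa [abs_div, div_lt_one (abs_pos.2 ht0)])
  have h0 : Tendsto (fun n => u n * r ^ n) atTop (𝓝 0) := by
    refine (zero_mul (0 : ℝ) ▸ hs.tendsto_atTop_zero.mul hρ).congr fun n => ?_
    rw [div_pow]
    field_simp
  exact hL (tendsto_nhds_unique hu h0)

end RadiusOfConvergence

section QPochhammer

lemma one_sub_mul_pow_pos {c q : ℝ} (hc : c < 1) (hq0 : 0 ≤ q) (hq1 : q ≤ 1) (i : ℕ) :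
    0 < 1 - c * q ^ i := by
  have h0 := pow_nonneg hq0 i
  have h1 := pow_le_one₀ hq0 hq1 (n := i)
  rcases le_or_gt c 0 with hc0 | hc0 <;> nlinarith

lemma qpR_pos {c q : ℝ} (hc : c < 1) (hq0 : 0 ≤ q) (hq1 : q ≤ 1) (n : ℕ) : 0 < qpR c q n :=
  prod_pos fun i _ => one_sub_mul_pow_pos hc hq0 hq1 i

lemma qpR_ne_zero {c q : ℝ} {n : ℕ} (h : ∀ i < n, c * q ^ i ≠ 1) : qpR c q n ≠ 0 :=
  prod_ne_zero_iff.2 fun i hi => sub_ne_zero.2 (h i (mem_range.1 hi)).symm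

lemma summable_norm_neg_mul_pow {q : ℝ} (hq : |q| < 1) (c : ℝ) :
    Summable fun i => ‖-(c * q ^ i)‖ := by
  simpa [abs_mul] using (summable_geometric_of_abs_lt_one (by rwa [abs_abs])).mul_left |c|

lemma tendsto_qpR {q : ℝ} (hq : |q| < 1) (c : ℝ) :
    Tendsto (qpR c q) atTop (𝓝 (∏' i, (1 - c * q ^ i))) := by
  show Tendsto (fun n => ∏ i ∈ range n, (1 - c * q ^ i)) _ _
  simpa [← sub_eq_add_neg] using
    (multipliable_one_add_of_summable (summable_norm_neg_mul_pow hq c)).tendsto_prod_tprod_nat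

lemma tprod_one_sub_mul_pow_ne_zero {c q : ℝ} (hc : c < 1) (hq0 : 0 ≤ q) (hq1 : q < 1) :
    ∏' i, (1 - c * q ^ i) ≠ 0 := by
  have hfactor : ∀ i, 1 + -(c * q ^ i) ≠ 0 := fun i => by
    rw [← sub_eq_add_neg]
    exact (one_sub_mul_pow_pos hc hq0 hq1.le i).ne'
  simpa [← sub_eq_add_neg] using tprod_one_add_ne_zero_of_summable hfactor
    (summable_norm_neg_mul_pow (abs_lt.2 ⟨by linarith, hq1⟩) c)

lemma qpR_inv_pow_eq_zero {q : ℝ} (hq : q ≠ 0) {k j : ℕ} (h : k < j) : qpR (q⁻¹ ^ k) q j = 0 :=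
  prod_eq_zero (mem_range.2 h) (by rw [inv_pow, inv_mul_cancel₀ (pow_ne_zero k hq), sub_self])

lemma pow_mul_qpR_inv_pow {q : ℝ} (hq : q ≠ 0) {j k : ℕ} (hj : j ≤ k) (n : ℕ) :
    q ^ (n * k) * qpR (q⁻¹ ^ n) q j = (q ^ n) ^ (k - j) * ∏ i ∈ range j, (q ^ n - q ^ i) := by
  have hfactor : ∀ i, q ^ n * (1 - q⁻¹ ^ n * q ^ i) = q ^ n - q ^ i := fun i => by
    rw [inv_pow, mul_sub, mul_one, ← mul_assoc, mul_inv_cancel₀ (pow_ne_zero n hq), one_mul]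
  rw [qpR, ← prod_congr rfl fun i _ => hfactor i, ← pow_card_mul_prod, card_range, ← mul_assoc,
    ← pow_add, Nat.sub_add_cancel hj, pow_mul]

lemma tendsto_pow_mul_qpR_inv_pow {q : ℝ} (hq : q ≠ 0) (hq1 : |q| < 1) {j k : ℕ} (hj : j ≤ k) :
    Tendsto (fun n => q ^ (n * k) * qpR (q⁻¹ ^ n) q j) atTop
      (𝓝 (0 ^ (k - j) * ∏ i ∈ range j, -q ^ i)) := by
  have hcont : Continuous fun x : ℝ => x ^ (k - j) * ∏ i ∈ range j, (x - q ^ i) := by fun_prop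
  have h := (hcont.tendsto 0).comp (tendsto_pow_atTop_nhds_zero_of_abs_lt_one hq1)
  simp only [Function.comp_def, zero_sub] at h
  exact h.congr fun n => (pow_mul_qpR_inv_pow hq hj n).symm

lemma tendsto_pow_mul_sum_qpR_inv_pow {q : ℝ} (hq : q ≠ 0) (hq1 : |q| < 1) {k : ℕ}
    {c : ℕ → ℝ} (hc : ∀ j, k < j → c j = 0) :
    Tendsto (fun n => q ^ (n * k) * ∑ j ∈ range (n + 1), qpR (q⁻¹ ^ n) q j * c j) atTop
      (𝓝 ((∏ i ∈ range k, -q ^ i) * c k)) := by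
  have htrunc : ∀ n, k ≤ n → q ^ (n * k) * ∑ j ∈ range (n + 1), qpR (q⁻¹ ^ n) q j * c j =
      ∑ j ∈ range (k + 1), q ^ (n * k) * qpR (q⁻¹ ^ n) q j * c j := fun n hn => by
    rw [← sum_subset (range_subset_range.2 (by omega : k + 1 ≤ n + 1)) fun j _ hj => by
      rw [hc j (by simpa using hj), mul_zero], mul_sum]
    simp only [mul_assoc]
  have hlim : ∑ j ∈ range (k + 1), 0 ^ (k - j) * (∏ i ∈ range j, -q ^ i) * c j =
      (∏ i ∈ range k, -q ^ i) * c k := by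
    rw [sum_range_succ, sum_eq_zero fun j hj => by
      rw [zero_pow (by simp at hj; omega), zero_mul, zero_mul], Nat.sub_self, pow_zero, one_mul,
      zero_add]
  rw [← hlim]
  refine Tendsto.congr' (eventually_atTop.2 ⟨k, fun n hn => (htrunc n hn).symm⟩) ?_
  exact tendsto_finsetSum _ fun j hj =>
    (tendsto_pow_mul_qpR_inv_pow hq hq1 (Nat.lt_succ_iff.1 (mem_range.1 hj))).mul_const (c j)

end QPochhammer

section AlSalamChihara

variable {q a b : ℝ} {k : ℕ}

noncomputable def ascCoeff (q a b : ℝ) (k j : ℕ) : ℝ :=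
  qpR (a ^ 2 * q ^ k) q j * qpR (q⁻¹ ^ k) q j / (qpR q q j * qpR (a * b) q j) * q ^ j

lemma ascMass_eq (n : ℕ) :
    ascMass q a b k n = a⁻¹ ^ n * qpR (a * b) q n *
      ∑ j ∈ range (n + 1), qpR (q⁻¹ ^ n) q j * ascCoeff q a b k j := by
  simp only [ascMass, ascCoeff, mul_div_assoc, mul_assoc]

lemma ascCoeff_eq_zero (hq : q ≠ 0) {j : ℕ} (hj : k < j) : ascCoeff q a b k j = 0 := by
  rw [ascCoeff, qpR_inv_pow_eq_zero hq hj, mul_zero, zero_div, zero_mul]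

lemma ascCoeff_self_ne_zero (hq : 0 < q) (hq1 : q < 1) (hab : a * b < 1)
    (hk : 1 < |a| * q ^ k) : ascCoeff q a b k k ≠ 0 := by
  have hpeak : ∀ i < k, a ^ 2 * q ^ k * q ^ i ≠ 1 := fun i hi => by
    refine ne_of_gt ?_
    calc (1 : ℝ) < (|a| * q ^ k) ^ 2 := one_lt_pow₀ hk two_ne_zero
      _ = a ^ 2 * q ^ k * q ^ k := by rw [mul_pow, sq_abs]; ring
      _ ≤ a ^ 2 * q ^ k * q ^ i :=
        mul_le_mul_of_nonneg_left (pow_le_pow_of_le_one hq.le hq1.le hi.le) (by positivity)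
  have hterm : ∀ i < k, q⁻¹ ^ k * q ^ i ≠ 1 := fun i hi => by
    rw [inv_pow, ← div_eq_inv_mul]
    exact ((one_lt_div (pow_pos hq k)).2 (pow_lt_pow_right_of_lt_one₀ hq hq1 hi)).ne'
  have hden : qpR q q k * qpR (a * b) q k ≠ 0 :=
    (mul_pos (qpR_pos hq1 hq.le hq1.le k) (qpR_pos hab hq.le hq1.le k)).ne'
  rw [ascCoeff]
  exact mul_ne_zero (div_ne_zero (mul_ne_zero (qpR_ne_zero hpeak) (qpR_ne_zero hterm)) hden)
    (pow_ne_zero k hq.ne')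

lemma ascMass_sq_div_mul_pow (ha : a ≠ 0) {n : ℕ} (hP : qpR (a * b) q n ≠ 0) :
    ascMass q a b k n ^ 2 / (qpR q q n * qpR (a * b) q n) * (a ^ 2 * q ^ (2 * k)) ^ n =
      qpR (a * b) q n / qpR q q n *
        (q ^ (n * k) * ∑ j ∈ range (n + 1), qpR (q⁻¹ ^ n) q j * ascCoeff q a b k j) ^ 2 := by
  rw [ascMass_eq, inv_pow]
  field_simp
  ring

lemma tendsto_ascMass_sq_div_mul_pow (hq : 0 < q) (hq1 : q < 1) (hab : a * b < 1)
    (ha : a ≠ 0) :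
    Tendsto (fun n => ascMass q a b k n ^ 2 / (qpR q q n * qpR (a * b) q n) *
        (a ^ 2 * q ^ (2 * k)) ^ n) atTop
      (𝓝 ((∏' i, (1 - a * b * q ^ i)) / (∏' i, (1 - q * q ^ i)) *
        ((∏ i ∈ range k, -q ^ i) * ascCoeff q a b k k) ^ 2)) := by
  have hq' : |q| < 1 := abs_lt.2 ⟨by linarith, hq1⟩
  refine Tendsto.congr
    (fun n => (ascMass_sq_div_mul_pow ha (qpR_pos hab hq.le hq1.le n).ne').symm) ?_
  exact ((tendsto_qpR hq' _).div (tendsto_qpR hq' q)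
    (tprod_one_sub_mul_pow_ne_zero hq1 hq.le hq1)).mul
    ((tendsto_pow_mul_sum_qpR_inv_pow hq.ne' hq' fun j hj => ascCoeff_eq_zero hq.ne' hj).pow 2)

end AlSalamChihara

theorem stmt14_general (q a b : ℝ) (hq : 0 < q) (hq1 : q < 1) (hab : a * b < 1)
    (k : ℕ) (hk : 1 < |a| * q ^ k) :
    (∀ t : ℝ, |t| < a ^ 2 * q ^ (2 * k) →
      Summable (fun n : ℕ => (ascMass q a b k n) ^ 2 / (qpR q q n * qpR (a * b) q n) * t ^ n)) ∧
    (∀ t : ℝ, a ^ 2 * q ^ (2 * k) < |t| →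
      ¬ Summable (fun n : ℕ => (ascMass q a b k n) ^ 2 / (qpR q q n * qpR (a * b) q n) * t ^ n)) ∧
    1 < a ^ 2 * q ^ (2 * k) := by
  have hr : 1 < a ^ 2 * q ^ (2 * k) :=
    calc (1 : ℝ) < (|a| * q ^ k) ^ 2 := one_lt_pow₀ hk two_ne_zero
      _ = a ^ 2 * q ^ (2 * k) := by rw [mul_pow, sq_abs, ← pow_mul, mul_comm k]
  have ha : a ≠ 0 := by rintro rfl; simp at hk; linarith
  have hlim := tendsto_ascMass_sq_div_mul_pow (k := k) hq hq1 hab ha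
  have hL : (∏' i, (1 - a * b * q ^ i)) / (∏' i, (1 - q * q ^ i)) *
      ((∏ i ∈ range k, -q ^ i) * ascCoeff q a b k k) ^ 2 ≠ 0 := by
    have hlead : ∏ i ∈ range k, -q ^ i ≠ 0 := prod_ne_zero_iff.2 fun i _ => by simp [hq.ne']
    exact mul_ne_zero (div_ne_zero (tprod_one_sub_mul_pow_ne_zero hab hq.le hq1)
        (tprod_one_sub_mul_pow_ne_zero hq1 hq.le hq1))
      (pow_ne_zero 2 (mul_ne_zero hlead (ascCoeff_self_ne_zero hq hq1 hab hk)))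
  refine ⟨fun t ht => summable_mul_pow_of_tendsto hlim ht, fun t ht => ?_, hr⟩
  exact not_summable_mul_pow_of_tendsto hlim hL (by rwa [abs_of_pos (one_pos.trans hr)])

/-- At the discrete mass point `x_k`, the diagonal Poisson kernel
`P_t(x_k,x_k;a,b|q) = ∑ tⁿ pₙ(x_k)²/((q;q)ₙ(ab;q)ₙ)` has radius of convergence
in `t` equal to `a²q^{2k}`, which is greater than `1`. -/
theorem stmt14 (q a b : ℝ) (hq : 0 < q) (hq1 : q < 1) (hab : a * b < 1)
    (ha : 1 < |a|) (k : ℕ) (hk : 1 < |a| * q ^ k) :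
    (∀ t : ℝ, |t| < a ^ 2 * q ^ (2 * k) →
      Summable (fun n : ℕ => (ascMass q a b k n) ^ 2 / (qpR q q n * qpR (a * b) q n) * t ^ n)) ∧
    (∀ t : ℝ, a ^ 2 * q ^ (2 * k) < |t| →
      ¬ Summable (fun n : ℕ => (ascMass q a b k n) ^ 2 / (qpR q q n * qpR (a * b) q n) * t ^ n)) ∧
    1 < a ^ 2 * q ^ (2 * k) :=
  stmt14_general q a b hq hq1 hab k hk
end
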